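/- For ρ ∈ (−1, 1) let h_ρ(x, y) := (2π√(1−ρ²))^{-1} exp(−(x² − 2ρxy + y²)/(2(1−ρ²))). There exists a constant K < ∞ such that for every ρ ∈ ℝ with |ρ| ≤ 1/2, ∫_{ℝ²} |h_ρ(x, y) − h_0(x, y)| d(x, y) ≤ K · |ρ|, where h_0(x, y) = (2π)^{-1} exp(−(x² + y²)/2). -/

import Mathlib

open Real MeasureTheory

/-- The bivariate standard normal density with correlation `ρ`:
`h_ρ(x,y) = (2π√(1-ρ²))⁻¹ exp(-(x² - 2ρxy + y²)/(2(1-ρ²)))`. -/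
noncomputable def biNormPDF (ρ x y : ℝ) : ℝ :=
  (2 * π * Real.sqrt (1 - ρ ^ 2))⁻¹ *
    Real.exp (-(x ^ 2 - 2 * ρ * x * y + y ^ 2) / (2 * (1 - ρ ^ 2)))

/-!
Write `s = x² + y²` and `Q_ρ = (x² - 2ρxy + y²)/(2(1-ρ²))` (`biNormExponent`), so that
`h_ρ ∝ (1-ρ²)^{-1/2} e^{-Q_ρ}` and `Q_0 = s/2`. For `|ρ| ≤ 1/2` one has `Q_ρ ≥ s/4` and
`|Q_ρ - s/2| ≤ |ρ| s`, while the normalising factor `(1-ρ²)^{-1/2}` is within `|ρ|` of `1`.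
Since `exp` is `e^{-c}`-Lipschitz on `[c, ∞)`, this gives
`|h_ρ - h_0| ≤ |ρ| (1 + s) e^{-s/4} ≤ 8 |ρ| e^{-s/8}`, which is integrable.
-/

noncomputable def biNormExponent (ρ x y : ℝ) : ℝ :=
  (x ^ 2 - 2 * ρ * x * y + y ^ 2) / (2 * (1 - ρ ^ 2))

lemma abs_exp_neg_sub_exp_neg_le {a b c : ℝ} (ha : c ≤ a) (hb : c ≤ b) :
    |exp (-a) - exp (-b)| ≤ |a - b| * exp (-c) := by
  wlog hab : b ≤ a generalizing a b
  · rw [abs_sub_comm, abs_sub_comm a b]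
    exact this hb ha (le_of_not_ge hab)
  have hexp : exp (-a) = exp (-(a - b)) * exp (-b) := by rw [← exp_add]; ring_nf
  have hlin : 1 - (a - b) ≤ exp (-(a - b)) := one_sub_le_exp_neg _
  have hmono : exp (-b) ≤ exp (-c) := exp_le_exp.2 (neg_le_neg hb)
  rw [abs_of_nonpos (by rw [sub_nonpos]; exact exp_le_exp.2 (neg_le_neg hab)),
    abs_of_nonneg (sub_nonneg.2 hab), hexp]
  nlinarith [exp_pos (-b)]

lemma one_add_mul_exp_neg_div_four_le (s : ℝ) :
    (1 + s) * exp (-(s / 4)) ≤ 8 * exp (-(s / 8)) := by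
  have hlin : 1 + s ≤ 8 * exp (s / 8) := by linarith [add_one_le_exp (s / 8)]
  calc (1 + s) * exp (-(s / 4)) ≤ 8 * exp (s / 8) * exp (-(s / 4)) :=
        mul_le_mul_of_nonneg_right hlin (exp_pos _).le
    _ = 8 * exp (-(s / 8)) := by rw [mul_assoc, ← exp_add]; ring_nf

lemma integrable_exp_neg_mul_add_sq {b : ℝ} (hb : 0 < b) :
    Integrable (fun p : ℝ × ℝ => exp (-b * (p.1 ^ 2 + p.2 ^ 2))) := by
  have hprod := (integrable_exp_neg_mul_sq hb).mul_prod (integrable_exp_neg_mul_sq hb)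
  rw [← Measure.volume_eq_prod] at hprod
  refine hprod.congr (Filter.Eventually.of_forall fun p => ?_)
  simp only [← exp_add]
  ring_nf

lemma abs_two_mul_mul_mul_le (ρ x y : ℝ) : |2 * ρ * x * y| ≤ |ρ| * (x ^ 2 + y ^ 2) := by
  have hxy : |2 * x * y| ≤ x ^ 2 + y ^ 2 := by
    rw [abs_mul, abs_mul, abs_two, ← sq_abs x, ← sq_abs y]
    exact two_mul_le_add_sq _ _
  rw [show 2 * ρ * x * y = ρ * (2 * x * y) by ring, abs_mul]
  exact mul_le_mul_of_nonneg_left hxy (abs_nonneg ρ)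

lemma sq_le_abs_div_two_of_abs_le_half {ρ : ℝ} (hρ : |ρ| ≤ 1 / 2) : ρ ^ 2 ≤ |ρ| / 2 := by
  rw [← sq_abs]; nlinarith [abs_nonneg ρ]

lemma add_sq_div_four_le_biNormExponent {ρ : ℝ} (hρ : |ρ| ≤ 1 / 2) (x y : ℝ) :
    (x ^ 2 + y ^ 2) / 4 ≤ biNormExponent ρ x y := by
  rw [biNormExponent]
  have hρ2 := sq_le_abs_div_two_of_abs_le_half hρ
  rw [le_div_iff₀ (by nlinarith [abs_nonneg ρ])]
  nlinarith [le_abs_self (2 * ρ * x * y), abs_two_mul_mul_mul_le ρ x y, sq_nonneg x, sq_nonneg y,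
    abs_nonneg ρ]

lemma abs_biNormExponent_sub_le {ρ : ℝ} (hρ : |ρ| ≤ 1 / 2) (x y : ℝ) :
    |biNormExponent ρ x y - (x ^ 2 + y ^ 2) / 2| ≤ |ρ| * (x ^ 2 + y ^ 2) := by
  have hρ2 := sq_le_abs_div_two_of_abs_le_half hρ
  have hden : 3 / 2 ≤ 2 * (1 - ρ ^ 2) := by nlinarith [abs_nonneg ρ]
  have hne : 1 - ρ ^ 2 ≠ 0 := by linarith
  have hs : 0 ≤ x ^ 2 + y ^ 2 := by positivity
  have hnum : |ρ ^ 2 * (x ^ 2 + y ^ 2) - 2 * ρ * x * y| ≤ 3 / 2 * (|ρ| * (x ^ 2 + y ^ 2)) :=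
    calc _ ≤ |ρ ^ 2 * (x ^ 2 + y ^ 2)| + |2 * ρ * x * y| := abs_sub _ _
      _ ≤ |ρ| / 2 * (x ^ 2 + y ^ 2) + |ρ| * (x ^ 2 + y ^ 2) := by
        rw [abs_mul, abs_of_nonneg hs, abs_sq]
        gcongr
        exact abs_two_mul_mul_mul_le ρ x y
      _ = 3 / 2 * (|ρ| * (x ^ 2 + y ^ 2)) := by ring
  have hdiff : biNormExponent ρ x y - (x ^ 2 + y ^ 2) / 2
      = (ρ ^ 2 * (x ^ 2 + y ^ 2) - 2 * ρ * x * y) / (2 * (1 - ρ ^ 2)) := by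
    rw [biNormExponent]; field_simp; ring
  rw [hdiff, abs_div, abs_of_pos (by linarith : (0 : ℝ) < 2 * (1 - ρ ^ 2)),
    div_le_iff₀ (by linarith)]
  nlinarith [mul_nonneg (abs_nonneg ρ) hs]

lemma abs_inv_sqrt_one_sub_sq_sub_one_le {ρ : ℝ} (hρ : |ρ| ≤ 1 / 2) :
    |(√(1 - ρ ^ 2))⁻¹ - 1| ≤ |ρ| := by
  have hρ2 := sq_le_abs_div_two_of_abs_le_half hρ
  set t := √(1 - ρ ^ 2)
  have ht2 : t ^ 2 = 1 - ρ ^ 2 := sq_sqrt (by nlinarith [abs_nonneg ρ])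
  have htl : 1 / 2 ≤ t := by nlinarith [sqrt_nonneg (1 - ρ ^ 2)]
  have htu : t ≤ 1 := by nlinarith [sqrt_nonneg (1 - ρ ^ 2)]
  have hpos : 0 < t := by linarith
  rw [show t⁻¹ - 1 = (1 - t) / t by field_simp,
    abs_of_nonneg (div_nonneg (by linarith) hpos.le), div_le_iff₀ hpos]
  nlinarith

lemma biNormPDF_eq (ρ x y : ℝ) :
    biNormPDF ρ x y = (2 * π)⁻¹ * ((√(1 - ρ ^ 2))⁻¹ * exp (-biNormExponent ρ x y)) := by
  rw [biNormPDF, biNormExponent, mul_inv, neg_div, mul_assoc]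

lemma abs_biNormPDF_sub_biNormPDF_zero_le {ρ : ℝ} (hρ : |ρ| ≤ 1 / 2) (x y : ℝ) :
    |biNormPDF ρ x y - biNormPDF 0 x y| ≤ |ρ| * (8 * exp (-(1 / 8) * (x ^ 2 + y ^ 2))) := by
  set s := x ^ 2 + y ^ 2
  set Q := biNormExponent ρ x y
  set c := (√(1 - ρ ^ 2))⁻¹ - 1
  have hdecomp : biNormPDF ρ x y - biNormPDF 0 x y
      = (2 * π)⁻¹ * (c * exp (-Q) + (exp (-Q) - exp (-(s / 2)))) := by
    simp only [biNormPDF_eq, biNormExponent, c, Q, s]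
    norm_num
    ring
  have hQ : s / 4 ≤ Q := add_sq_div_four_le_biNormExponent hρ x y
  have hexpQ : exp (-Q) ≤ exp (-(s / 4)) := exp_le_exp.2 (neg_le_neg hQ)
  have h2π : |(2 * π)⁻¹| ≤ 1 := by
    rw [abs_of_pos (by positivity)]
    exact inv_le_one_of_one_le₀ (by linarith [pi_gt_three])
  calc |biNormPDF ρ x y - biNormPDF 0 x y|
      ≤ |c * exp (-Q) + (exp (-Q) - exp (-(s / 2)))| := by
        rw [hdecomp, abs_mul]
        exact mul_le_of_le_one_left (abs_nonneg _) h2π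
    _ ≤ |c| * exp (-Q) + |exp (-Q) - exp (-(s / 2))| :=
        (abs_add_le _ _).trans_eq (by rw [abs_mul, abs_of_pos (exp_pos _)])
    _ ≤ |ρ| * exp (-(s / 4)) + |ρ| * s * exp (-(s / 4)) := by
        have hs : s / 4 ≤ s / 2 := by linarith [add_nonneg (sq_nonneg x) (sq_nonneg y)]
        exact add_le_add
          (mul_le_mul (abs_inv_sqrt_one_sub_sq_sub_one_le hρ) hexpQ (exp_pos _).le (abs_nonneg ρ))
          ((abs_exp_neg_sub_exp_neg_le hQ hs).trans
            (mul_le_mul_of_nonneg_right (abs_biNormExponent_sub_le hρ x y) (exp_pos _).le))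
    _ = |ρ| * ((1 + s) * exp (-(s / 4))) := by ring
    _ ≤ |ρ| * (8 * exp (-(1 / 8) * s)) := by
        rw [show -(1 / 8) * s = -(s / 8) by ring]
        exact mul_le_mul_of_nonneg_left (one_add_mul_exp_neg_div_four_le s) (abs_nonneg ρ)

/-- there is a constant `K` such that for every `ρ` with `|ρ| ≤ 1/2`,
`∫_{ℝ²} |h_ρ(x,y) - h_0(x,y)| d(x,y) ≤ K |ρ|`. -/
theorem stmt12 :
    ∃ K : ℝ, ∀ ρ : ℝ, |ρ| ≤ 1 / 2 →
      (∫ p : ℝ × ℝ, |biNormPDF ρ p.1 p.2 - biNormPDF 0 p.1 p.2|) ≤ K * |ρ| := by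
  set G : ℝ × ℝ → ℝ := fun p => 8 * exp (-(1 / 8) * (p.1 ^ 2 + p.2 ^ 2))
  have hG : Integrable G := (integrable_exp_neg_mul_add_sq (by norm_num)).const_mul 8
  refine ⟨∫ p, G p, fun ρ hρ => ?_⟩
  have hbound (p : ℝ × ℝ) : |biNormPDF ρ p.1 p.2 - biNormPDF 0 p.1 p.2| ≤ |ρ| * G p :=
    abs_biNormPDF_sub_biNormPDF_zero_le hρ p.1 p.2
  have hmeas : Continuous fun p : ℝ × ℝ => |biNormPDF ρ p.1 p.2 - biNormPDF 0 p.1 p.2| := by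
    unfold biNormPDF
    fun_prop
  have hint : Integrable fun p : ℝ × ℝ => |biNormPDF ρ p.1 p.2 - biNormPDF 0 p.1 p.2| :=
    (hG.const_mul |ρ|).mono' hmeas.aestronglyMeasurable
      (Filter.Eventually.of_forall fun p => by rw [norm_of_nonneg (abs_nonneg _)]; exact hbound p)
  calc (∫ p : ℝ × ℝ, |biNormPDF ρ p.1 p.2 - biNormPDF 0 p.1 p.2|)
      ≤ ∫ p, |ρ| * G p := integral_mono hint (hG.const_mul _) hbound
    _ = (∫ p, G p) * |ρ| := by rw [integral_const_mul, mul_comm]
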